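/- arXiv:0705.3365 — 5 statements merged into one kernel-verified Lean document; each statement's English description precedes it below -/
import Mathlib

section
/- Let F be an m×n real matrix, C : [a,b] → Mat(m,n,ℝ) a continuous matrix-valued function, and define the operator D on the domain W = {x ∈ L²([a,b];ℝⁿ) : F·x is absolutely continuous with derivative in L²} by D x = (d/dt(F·x) − C(·)x, (F·x)(a)) ∈ L²([a,b];ℝᵐ) × ℝᵐ. Then D is a closed operator: if xₙ ∈ W, xₙ → x in L², and D xₙ → (f, f₀) in L² × ℝᵐ, then x ∈ W and D x = (f, f₀). -/
/-!
The convergences `xₖ → x` and `gₖ - C xₖ → f` in `L²` give `gₖ → g := f + C x` in `L²`, since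
multiplication by the continuous, hence bounded, matrix function `C` is bounded on `L²([a,b])`.
On a bounded interval this is also `L¹` convergence, so `hₖ t = hₖ a + ∫ₐᵗ gₖ` converges for every
`t ∈ [a,b]` to `h t := f₀ + ∫ₐᵗ g`. On the other hand `F xₖ → F x` in `L²`, so along a subsequence
almost everywhere; since `F xₖ = hₖ` almost everywhere, `F x = h` almost everywhere.
-/

open MeasureTheory Set Filter
open scoped Matrix Topology ENNReal

instance Matrix.pseudoMetrizableSpace {m n R : Type*} [Finite m] [Finite n] [TopologicalSpace R]
    [TopologicalSpace.PseudoMetrizableSpace R] :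
    TopologicalSpace.PseudoMetrizableSpace (Matrix m n R) :=
  inferInstanceAs (TopologicalSpace.PseudoMetrizableSpace (m → n → R))

theorem ContinuousOn.exists_norm_mulVec_le {X m n : Type*} [TopologicalSpace X] [Fintype m]
    [Fintype n] {C : X → Matrix m n ℝ} {s : Set X} (hC : ContinuousOn C s) (hs : IsCompact s) :
    ∃ K, ∀ t ∈ s, ∀ v, ‖C t *ᵥ v‖ ≤ K * ‖v‖ := by
  -- This norm induces the usual topology of `Matrix`, so `hC` is continuity for it as well.
  let := @Matrix.linftyOpNormedAddCommGroup m n ℝ _ _ _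
  obtain ⟨K, hK⟩ := hs.exists_bound_of_continuousOn hC
  exact ⟨K, fun t ht v =>
    (Matrix.linfty_opNorm_mulVec (C t) v).trans (by gcongr; exact hK t ht)⟩

section Lp

variable {α ι E : Type*} [MeasurableSpace α] {μ : Measure α} {l : Filter ι}

theorem tendsto_eLpNorm_add_nhds_zero [NormedAddCommGroup E] {f g : ι → α → E}
    {p : ℝ≥0∞} (hp : 1 ≤ p) (hf : ∀ k, AEStronglyMeasurable (f k) μ)
    (hg : ∀ k, AEStronglyMeasurable (g k) μ) (hf0 : Tendsto (fun k => eLpNorm (f k) p μ) l (𝓝 0))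
    (hg0 : Tendsto (fun k => eLpNorm (g k) p μ) l (𝓝 0)) :
    Tendsto (fun k => eLpNorm (f k + g k) p μ) l (𝓝 0) := by
  refine tendsto_of_tendsto_of_tendsto_of_le_of_le tendsto_const_nhds ?_ (fun _ => zero_le)
    fun k => eLpNorm_add_le (hf k) (hg k) hp
  simpa using hf0.add hg0

theorem tendsto_eLpNorm_nhds_zero_of_le [NormedAddCommGroup E] [IsFiniteMeasure μ]
    {f : ι → α → E} {p q : ℝ≥0∞} (hpq : p ≤ q) (hf : ∀ k, AEStronglyMeasurable (f k) μ)
    (h : Tendsto (fun k => eLpNorm (f k) q μ) l (𝓝 0)) :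
    Tendsto (fun k => eLpNorm (f k) p μ) l (𝓝 0) := by
  rcases eq_zero_or_neZero μ with rfl | hμ
  · simpa using tendsto_const_nhds
  have hc : μ univ ^ (1 / p.toReal - 1 / q.toReal) ≠ ∞ :=
    ENNReal.rpow_ne_top_of_ne_zero (Measure.measure_univ_ne_zero.2 hμ.out) (measure_ne_top _ _)
  refine tendsto_of_tendsto_of_tendsto_of_le_of_le tendsto_const_nhds ?_ (fun _ => zero_le)
    fun k => eLpNorm_le_eLpNorm_mul_rpow_measure_univ hpq (hf k)
  simpa using ENNReal.Tendsto.mul_const h (Or.inr hc)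

theorem ae_eq_of_tendstoInMeasure_of_ae_tendsto [MetricSpace E] {f h : ℕ → α → E} {g u : α → E}
    (hf : TendstoInMeasure μ f atTop g) (hfh : ∀ k, f k =ᵐ[μ] h k)
    (hh : ∀ᵐ t ∂μ, Tendsto (fun k => h k t) atTop (𝓝 (u t))) : g =ᵐ[μ] u := by
  obtain ⟨φ, hφ, hφg⟩ := hf.exists_seq_tendsto_ae
  filter_upwards [hφg, ae_all_iff.2 hfh, hh] with t hfg hfht hhu
  have hφu := hhu.comp hφ.tendsto_atTop
  simp only [Function.comp_def, ← hfht] at hφu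
  exact tendsto_nhds_unique hfg hφu

end Lp

section MatrixMultiplication

variable {α ι m n : Type*} [MeasurableSpace α] {μ : Measure α} {l : Filter ι} [Fintype n]
  {C : α → Matrix m n ℝ} {K : ℝ} {p : ℝ≥0∞}

theorem MeasureTheory.AEStronglyMeasurable.matrix_mulVec (hC : AEStronglyMeasurable C μ)
    {u : α → n → ℝ} (hu : AEStronglyMeasurable u μ) :
    AEStronglyMeasurable (fun t => C t *ᵥ u t) μ :=
  (continuous_fst.matrix_mulVec continuous_snd).comp_aestronglyMeasurable₂ hC hu

variable [Fintype m]

theorem MeasureTheory.MemLp.matrix_mulVec {u : α → n → ℝ} (hu : MemLp u p μ)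
    (hC : AEStronglyMeasurable C μ) (hCK : ∀ᵐ t ∂μ, ∀ v, ‖C t *ᵥ v‖ ≤ K * ‖v‖) :
    MemLp (fun t => C t *ᵥ u t) p μ :=
  hu.of_le_mul (hC.matrix_mulVec hu.1) (hCK.mono fun t ht => ht (u t))

theorem tendsto_eLpNorm_matrix_mulVec_sub (hCK : ∀ᵐ t ∂μ, ∀ v, ‖C t *ᵥ v‖ ≤ K * ‖v‖)
    {us : ι → α → n → ℝ} {u : α → n → ℝ}
    (h : Tendsto (fun k => eLpNorm (fun t => us k t - u t) p μ) l (𝓝 0)) :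
    Tendsto (fun k => eLpNorm (fun t => C t *ᵥ us k t - C t *ᵥ u t) p μ) l (𝓝 0) := by
  refine tendsto_of_tendsto_of_tendsto_of_le_of_le tendsto_const_nhds ?_ (fun _ => zero_le)
    fun k => eLpNorm_le_mul_eLpNorm_of_ae_le_mul
      (hCK.mono fun t ht => (Matrix.mulVec_sub (C t) _ _).symm ▸ ht (us k t - u t)) p
  simpa using ENNReal.Tendsto.const_mul h (Or.inr ENNReal.ofReal_ne_top)

theorem tendsto_eLpNorm_sub_add_matrix_mulVec (hp : 1 ≤ p) (hC : AEStronglyMeasurable C μ)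
    (hCK : ∀ᵐ t ∂μ, ∀ v, ‖C t *ᵥ v‖ ≤ K * ‖v‖) {xs : ι → α → n → ℝ} {x : α → n → ℝ}
    {gs : ι → α → m → ℝ} {f : α → m → ℝ} (hxs : ∀ k, MemLp (xs k) p μ)
    (hgs : ∀ k, MemLp (gs k) p μ) (hx : MemLp x p μ) (hf : MemLp f p μ)
    (hconv_x : Tendsto (fun k => eLpNorm (fun t => xs k t - x t) p μ) l (𝓝 0))
    (hconv_D : Tendsto
      (fun k => eLpNorm (fun t => (gs k t - C t *ᵥ xs k t) - f t) p μ) l (𝓝 0)) :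
    Tendsto (fun k => eLpNorm (fun t => gs k t - (f t + C t *ᵥ x t)) p μ) l (𝓝 0) := by
  have hsplit : ∀ k, (fun t => gs k t - (f t + C t *ᵥ x t)) =
      (fun t => (gs k t - C t *ᵥ xs k t) - f t) + fun t => C t *ᵥ xs k t - C t *ᵥ x t := by
    intro k
    funext t
    simp only [Pi.add_apply]
    abel
  simp_rw [hsplit]
  refine tendsto_eLpNorm_add_nhds_zero hp (fun k => ?_) (fun k => ?_) hconv_D
    (tendsto_eLpNorm_matrix_mulVec_sub hCK hconv_x)
  · exact (((hgs k).sub ((hxs k).matrix_mulVec hC hCK)).sub hf).1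
  · exact ((hxs k).matrix_mulVec hC hCK).1.sub (hx.matrix_mulVec hC hCK).1

end MatrixMultiplication

theorem tendsto_intervalIntegral_of_tendsto_eLpNorm_one {ι E : Type*} [NormedAddCommGroup E]
    [NormedSpace ℝ E] {l : Filter ι} {a b t : ℝ} {gs : ι → ℝ → E} {g : ℝ → E}
    (hgs : ∀ k, Integrable (gs k) (volume.restrict (Icc a b)))
    (hg : AEStronglyMeasurable g (volume.restrict (Icc a b)))
    (h : Tendsto (fun k => eLpNorm (gs k - g) 1 (volume.restrict (Icc a b))) l (𝓝 0))
    (ht : t ∈ Icc a b) :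
    Tendsto (fun k => ∫ s in a..t, gs k s) l (𝓝 (∫ s in a..t, g s)) := by
  have hsub : Ioc a t ⊆ Icc a b := Ioc_subset_Icc_self.trans (Icc_subset_Icc_right ht.2)
  simp_rw [intervalIntegral.integral_of_le ht.1]
  rw [← Measure.restrict_restrict_of_subset hsub]
  exact tendsto_setIntegral_of_L1' g hg (Eventually.of_forall hgs) h _

theorem closedness_of_D_general {m n : ℕ} (F : Matrix (Fin m) (Fin n) ℝ)
    (a b : ℝ)
    (C : ℝ → Matrix (Fin m) (Fin n) ℝ) (hC : ContinuousOn C (Icc a b))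
    (μ : Measure ℝ) (hμ : μ = volume.restrict (Icc a b))
    (xs : ℕ → ℝ → Fin n → ℝ) (hs gs : ℕ → ℝ → Fin m → ℝ)
    (hxs : ∀ k, MemLp (xs k) 2 μ)
    (hgs : ∀ k, MemLp (gs k) 2 μ)
    (hrep : ∀ k, ∀ t ∈ Icc a b, hs k t = hs k a + ∫ s in a..t, gs k s)
    (hae : ∀ k, ∀ᵐ t ∂μ, F.mulVec (xs k t) = hs k t)
    (x : ℝ → Fin n → ℝ) (hx : MemLp x 2 μ)
    (f : ℝ → Fin m → ℝ) (hf : MemLp f 2 μ) (f₀ : Fin m → ℝ)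
    (hconv_x : Tendsto (fun k => eLpNorm (fun t => xs k t - x t) 2 μ) atTop (nhds 0))
    (hconv_D : Tendsto
      (fun k => eLpNorm (fun t => (gs k t - (C t).mulVec (xs k t)) - f t) 2 μ) atTop (nhds 0))
    (hconv_init : Tendsto (fun k => hs k a) atTop (nhds f₀)) :
    ∃ h g : ℝ → Fin m → ℝ, MemLp g 2 μ ∧
      (∀ t ∈ Icc a b, h t = h a + ∫ s in a..t, g s) ∧
      (∀ᵐ t ∂μ, F.mulVec (x t) = h t) ∧
      (∀ᵐ t ∂μ, g t - (C t).mulVec (x t) = f t) ∧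
      h a = f₀ := by
  have : IsFiniteMeasure μ := hμ ▸ inferInstance
  have hIcc : ∀ᵐ t ∂μ, t ∈ Icc a b := hμ ▸ ae_restrict_mem measurableSet_Icc
  have hCm : AEStronglyMeasurable C μ := hμ ▸ hC.aestronglyMeasurable measurableSet_Icc
  obtain ⟨K, hK⟩ := hC.exists_norm_mulVec_le isCompact_Icc
  obtain ⟨KF, hKF⟩ :=
    (continuousOn_const (s := Icc a b) (c := F)).exists_norm_mulVec_le isCompact_Icc
  set g : ℝ → Fin m → ℝ := fun t => f t + C t *ᵥ x t
  have hg : MemLp g 2 μ := hf.add (hx.matrix_mulVec hCm (hIcc.mono hK))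
  have hgs_g : Tendsto (fun k => eLpNorm (gs k - g) 1 μ) atTop (𝓝 0) :=
    tendsto_eLpNorm_nhds_zero_of_le one_le_two (fun k => ((hgs k).sub hg).1)
      (tendsto_eLpNorm_sub_add_matrix_mulVec one_le_two hCm (hIcc.mono hK) hxs hgs hx hf
        hconv_x hconv_D)
  have hhs : ∀ t ∈ Icc a b, Tendsto (fun k => hs k t) atTop (𝓝 (f₀ + ∫ s in a..t, g s)) :=
    fun t ht => (hconv_init.add (tendsto_intervalIntegral_of_tendsto_eLpNorm_one
      (fun k => hμ ▸ (hgs k).integrable one_le_two) (hμ ▸ hg.1) (hμ ▸ hgs_g) ht)).congr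
        fun k => (hrep k t ht).symm
  have hFxs : TendstoInMeasure μ (fun k t => F *ᵥ xs k t) atTop (fun t => F *ᵥ x t) :=
    tendstoInMeasure_of_tendsto_eLpNorm two_ne_zero
      (fun k => aestronglyMeasurable_const.matrix_mulVec (hxs k).1)
      (aestronglyMeasurable_const.matrix_mulVec hx.1)
      (tendsto_eLpNorm_matrix_mulVec_sub (hIcc.mono hKF) hconv_x)
  refine ⟨fun t => f₀ + ∫ s in a..t, g s, g, hg, by simp, ?_, by simp [g], by simp⟩
  exact ae_eq_of_tendstoInMeasure_of_ae_tendsto hFxs hae (hIcc.mono hhs)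

/-- Closedness of the operator `D x = ((F·x)' − C(·)x, (F·x)(a))`:
if `xₙ` lies in the domain (with AC representative `hₙ` of `F·xₙ` having `L²` derivative `gₙ`),
`xₙ → x` in `L²` and `D xₙ → (f, f₀)`, then `x` lies in the domain and `D x = (f, f₀)`. -/
theorem closedness_of_D {m n : ℕ} (F : Matrix (Fin m) (Fin n) ℝ)
    (a b : ℝ) (hab : a < b)
    (C : ℝ → Matrix (Fin m) (Fin n) ℝ) (hC : ContinuousOn C (Icc a b))
    (μ : Measure ℝ) (hμ : μ = volume.restrict (Icc a b))
    (xs : ℕ → ℝ → Fin n → ℝ) (hs gs : ℕ → ℝ → Fin m → ℝ)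
    (hxs : ∀ k, MemLp (xs k) 2 μ)
    (hgs : ∀ k, MemLp (gs k) 2 μ)
    (hrep : ∀ k, ∀ t ∈ Icc a b, hs k t = hs k a + ∫ s in a..t, gs k s)
    (hae : ∀ k, ∀ᵐ t ∂μ, F.mulVec (xs k t) = hs k t)
    (x : ℝ → Fin n → ℝ) (hx : MemLp x 2 μ)
    (f : ℝ → Fin m → ℝ) (hf : MemLp f 2 μ) (f₀ : Fin m → ℝ)
    (hconv_x : Tendsto (fun k => eLpNorm (fun t => xs k t - x t) 2 μ) atTop (nhds 0))
    (hconv_D : Tendsto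
      (fun k => eLpNorm (fun t => (gs k t - (C t).mulVec (xs k t)) - f t) 2 μ) atTop (nhds 0))
    (hconv_init : Tendsto (fun k => hs k a) atTop (nhds f₀)) :
    ∃ h g : ℝ → Fin m → ℝ, MemLp g 2 μ ∧
      (∀ t ∈ Icc a b, h t = h a + ∫ s in a..t, g s) ∧
      (∀ᵐ t ∂μ, F.mulVec (x t) = h t) ∧
      (∀ᵐ t ∂μ, g t - (C t).mulVec (x t) = f t) ∧
      h a = f₀ :=
  closedness_of_D_general F a b C hC μ hμ xs hs gs hxs hgs hrep hae x hx f hf f₀ hconv_x hconv_D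
    hconv_init
end

section
/- Integration by parts formula: Let F be an m×n real matrix, x ∈ L²([a,c];ℝⁿ) with F·x absolutely continuous and (F·x)' ∈ L², and z ∈ L²([a,c];ℝᵐ) with Fᵀ·z absolutely continuous and (Fᵀ·z)' ∈ L². Then ∫ₐᶜ [⟨(F·x)'(t), z(t)⟩ + ⟨(Fᵀ·z)'(t), x(t)⟩] dt = ⟨F·x(c), (Fᵀ)⁺ Fᵀ z(c)⟩ − ⟨F·x(a), (Fᵀ)⁺ Fᵀ z(a)⟩, where (Fᵀ)⁺ denotes the Moore–Penrose pseudoinverse of Fᵀ. -/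
/-!
Let `Q = P Fᵀ` and `R = Fᵀ P`. The Moore–Penrose identities make `Q` the orthogonal
projection onto the range of `F` and give `R Fᵀ = Fᵀ`. Hence `Q` fixes `F x`, so it fixes
its continuous representative everywhere and therefore its derivative almost everywhere;
likewise `R` fixes `(Fᵀ z)'`. This turns the integrand into
`⟨(F x)', P (Fᵀ z)⟩ + ⟨F x, P (Fᵀ z)'⟩`, the derivative of `⟨F x, P Fᵀ z⟩`, and the formula
is integration by parts for absolutely continuous functions.
-/

open MeasureTheory Set Matrix Filter

/-- `G` is absolutely continuous on `[a, b]` with derivative `f` almost everywhere. -/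
def IsPrimitiveOn {E : Type*} [NormedAddCommGroup E] [NormedSpace ℝ E] (G f : ℝ → E)
    (a b : ℝ) : Prop :=
  ∀ t ∈ Icc a b, G t = G a + ∫ s in a..t, f s

theorem ContinuousLinearMap.intervalIntegrable_comp {E F : Type*} [NormedAddCommGroup E]
    [NormedSpace ℝ E] [NormedAddCommGroup F] [NormedSpace ℝ F] {μ : Measure ℝ} {a b : ℝ}
    {f : ℝ → E} (L : E →L[ℝ] F) (hf : IntervalIntegrable f μ a b) :
    IntervalIntegrable (fun t => L (f t)) μ a b :=
  ⟨L.integrable_comp hf.1, L.integrable_comp hf.2⟩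

namespace IsPrimitiveOn

variable {E E' : Type*} [NormedAddCommGroup E] [NormedSpace ℝ E] [NormedAddCommGroup E']
  [NormedSpace ℝ E'] {a b : ℝ} {f G : ℝ → E}

theorem continuousOn (hG : IsPrimitiveOn G f a b) (hab : a ≤ b)
    (hf : IntervalIntegrable f volume a b) : ContinuousOn G (Icc a b) := by
  rw [IsPrimitiveOn, ← uIcc_of_le hab] at hG
  rw [← uIcc_of_le hab]
  exact (continuousOn_const.add
    (intervalIntegral.continuousOn_primitive_interval' hf left_mem_uIcc)).congr hG

theorem comp [CompleteSpace E] [CompleteSpace E'] (hG : IsPrimitiveOn G f a b) (hab : a ≤ b)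
    (hf : IntervalIntegrable f volume a b) (L : E →L[ℝ] E') :
    IsPrimitiveOn (fun t => L (G t)) (fun t => L (f t)) a b := by
  intro t ht
  show L (G t) = L (G a) + ∫ s in a..t, L (f s)
  rw [hG t ht, map_add, L.intervalIntegral_comp_comm
    (hf.mono_set (uIcc_subset_uIcc left_mem_uIcc (uIcc_of_le hab ▸ ht)))]

theorem mulVec {ι κ : Type*} [Fintype ι] [Fintype κ] {f G : ℝ → ι → ℝ}
    (hG : IsPrimitiveOn G f a b) (hab : a ≤ b) (hf : IntervalIntegrable f volume a b)
    (M : Matrix κ ι ℝ) :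
    IsPrimitiveOn (fun t => M *ᵥ G t) (fun t => M *ᵥ f t) a b :=
  hG.comp hab hf (mulVecLin M).toContinuousLinearMap

theorem ae_hasDerivAt [CompleteSpace E] (hG : IsPrimitiveOn G f a b) (hab : a ≤ b)
    (hf : IntervalIntegrable f volume a b) : ∀ᵐ t, t ∈ Ioo a b → HasDerivAt G (f t) t := by
  filter_upwards [hf.ae_hasDerivAt_integral] with t hprim ht
  have htab : t ∈ uIcc a b := uIcc_of_le hab ▸ Ioo_subset_Icc_self ht
  refine ((hprim htab a left_mem_uIcc).const_add (G a)).congr_of_eventuallyEq ?_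
  filter_upwards [Icc_mem_nhds ht.1 ht.2] using hG

theorem ae_apply_eq_self [CompleteSpace E] (hG : IsPrimitiveOn G f a b) (hab : a < b)
    (hf : IntervalIntegrable f volume a b) (L : E →L[ℝ] E)
    (hLG : ∀ᵐ t ∂volume.restrict (Icc a b), L (G t) = G t) :
    ∀ᵐ t ∂volume.restrict (Icc a b), L (f t) = f t := by
  have hGc := hG.continuousOn hab.le hf
  have hLG' : EqOn (L ∘ G) G (Icc a b) :=
    Measure.eqOn_Icc_of_ae_eq volume hab.ne hLG (L.continuous.comp_continuousOn hGc) hGc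
  rw [← Measure.restrict_congr_set Ioo_ae_eq_Icc, ae_restrict_iff' measurableSet_Ioo]
  filter_upwards [hG.ae_hasDerivAt hab.le hf] with t hderiv ht
  refine (L.hasFDerivAt.comp_hasDerivAt t (hderiv ht)).unique
    ((hderiv ht).congr_of_eventuallyEq ?_)
  filter_upwards [Icc_mem_nhds ht.1 ht.2] using hLG'

theorem ae_mulVec_eq_self {ι : Type*} [Fintype ι] {f G : ℝ → ι → ℝ}
    (hG : IsPrimitiveOn G f a b) (hab : a < b) (hf : IntervalIntegrable f volume a b)
    (M : Matrix ι ι ℝ)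
    (hMG : ∀ᵐ t ∂volume.restrict (Icc a b), M *ᵥ G t = G t) :
    ∀ᵐ t ∂volume.restrict (Icc a b), M *ᵥ f t = f t :=
  hG.ae_apply_eq_self hab hf (mulVecLin M).toContinuousLinearMap hMG

theorem integral_mul_add_mul {f g F G : ℝ → ℝ} (hF : IsPrimitiveOn F f a b)
    (hG : IsPrimitiveOn G g a b) (hab : a ≤ b) (hf : IntervalIntegrable f volume a b)
    (hg : IntervalIntegrable g volume a b) :
    ∫ t in a..b, (f t * G t + F t * g t) = F b * G b - F a * G a := by
  have hF₀ : AbsolutelyContinuousOnInterval (fun t => F a + ∫ s in a..t, f s) a b :=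
    contDiffOn_const.absolutelyContinuousOnInterval.fun_add
      (hf.absolutelyContinuousOnInterval_intervalIntegral left_mem_uIcc)
  have hG₀ : AbsolutelyContinuousOnInterval (fun t => G a + ∫ s in a..t, g s) a b :=
    contDiffOn_const.absolutelyContinuousOnInterval.fun_add
      (hg.absolutelyContinuousOnInterval_intervalIntegral left_mem_uIcc)
  have hb : b ∈ Icc a b := right_mem_Icc.2 hab
  rw [hF b hb, hG b hb]
  convert hF₀.integral_deriv_mul_eq_sub hG₀ using 1
  · rw [IsPrimitiveOn, ← uIcc_of_le hab] at hF hG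
    refine intervalIntegral.integral_congr_ae ?_
    filter_upwards [hf.ae_hasDerivAt_integral, hg.ae_hasDerivAt_integral] with t hft hgt ht
    have ht' : t ∈ uIcc a b := uIoc_subset_uIcc ht
    rw [((hft ht' a left_mem_uIcc).const_add (F a)).deriv,
      ((hgt ht' a left_mem_uIcc).const_add (G a)).deriv, hF t ht', hG t ht']
  · simp

theorem integral_dotProduct_add_dotProduct {ι : Type*} [Fintype ι] {f g F G : ℝ → ι → ℝ}
    (hF : IsPrimitiveOn F f a b) (hG : IsPrimitiveOn G g a b) (hab : a ≤ b)
    (hf : IntervalIntegrable f volume a b) (hg : IntervalIntegrable g volume a b) :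
    ∫ t in a..b, (f t ⬝ᵥ G t + F t ⬝ᵥ g t) = F b ⬝ᵥ G b - F a ⬝ᵥ G a := by
  let π (i : ι) : (ι → ℝ) →L[ℝ] ℝ := ContinuousLinearMap.proj i
  have hfi (i : ι) := (π i).intervalIntegrable_comp hf
  have hgi (i : ι) := (π i).intervalIntegrable_comp hg
  have hFi (i : ι) := hF.comp hab hf (π i)
  have hGi (i : ι) := hG.comp hab hg (π i)
  have hint (i : ι) :
      IntervalIntegrable (fun t => f t i * G t i + F t i * g t i) volume a b := by
    have hFc := (hFi i).continuousOn hab (hfi i)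
    have hGc := (hGi i).continuousOn hab (hgi i)
    rw [← uIcc_of_le hab] at hFc hGc
    exact ((hfi i).mul_continuousOn hGc).add ((hgi i).continuousOn_mul hFc)
  simp only [dotProduct, ← Finset.sum_add_distrib, ← Finset.sum_sub_distrib]
  rw [intervalIntegral.integral_finsetSum fun i _ => hint i]
  exact Finset.sum_congr rfl fun i _ =>
    (hFi i).integral_mul_add_mul (hGi i) hab (hfi i) (hgi i)

end IsPrimitiveOn

namespace Matrix

variable {R : Type*} [CommSemiring R] {k l : Type*} [Fintype k] [Fintype l]
  {B : Matrix k l R} {P : Matrix l k R}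

theorem mul_mul_transpose_eq_transpose (hB : B * P * B = B) (hPB : (P * B)ᵀ = P * B) :
    P * B * Bᵀ = Bᵀ := by
  calc P * B * Bᵀ = (B * (P * B)ᵀ)ᵀ := by rw [transpose_mul, transpose_transpose]
    _ = Bᵀ := by rw [hPB, ← Matrix.mul_assoc, hB]

theorem dotProduct_eq_dotProduct_mulVec_of_mulVec_eq (hPB : (P * B)ᵀ = P * B)
    {u v : l → R} {w : k → R} (hu : (P * B) *ᵥ u = u) (hv : B *ᵥ v = w) :
    u ⬝ᵥ v = u ⬝ᵥ P *ᵥ w := by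
  calc u ⬝ᵥ v = (P * B)ᵀ *ᵥ u ⬝ᵥ v := by rw [hPB, hu]
    _ = u ⬝ᵥ P *ᵥ w := by rw [mulVec_transpose, ← dotProduct_mulVec, ← mulVec_mulVec, hv]

theorem dotProduct_eq_mulVec_dotProduct_of_mulVec_eq {u v : k → R} {w : l → R}
    (hu : (B * P) *ᵥ u = u) (hv : Bᵀ *ᵥ v = w) : u ⬝ᵥ v = w ⬝ᵥ P *ᵥ u := by
  calc u ⬝ᵥ v = B *ᵥ (P *ᵥ u) ⬝ᵥ v := by rw [mulVec_mulVec, hu]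
    _ = w ⬝ᵥ P *ᵥ u := by rw [dotProduct_comm, dotProduct_mulVec, ← mulVec_transpose, hv]

end Matrix

theorem integration_by_parts_general {m n : ℕ} (F : Matrix (Fin m) (Fin n) ℝ)
    (P : Matrix (Fin m) (Fin n) ℝ)
    (hP1 : Fᵀ * P * Fᵀ = Fᵀ)
    (hP4 : (P * Fᵀ)ᵀ = P * Fᵀ)
    (a c : ℝ) (hac : a < c)
    (μ : Measure ℝ) (hμ : μ = volume.restrict (Icc a c))
    (x : ℝ → Fin n → ℝ)
    (hxr gx : ℝ → Fin m → ℝ) (hgx : MemLp gx 2 μ)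
    (hxrep : ∀ t ∈ Icc a c, hxr t = hxr a + ∫ s in a..t, gx s)
    (hxae : ∀ᵐ t ∂μ, F.mulVec (x t) = hxr t)
    (z : ℝ → Fin m → ℝ)
    (hzr gz : ℝ → Fin n → ℝ) (hgz : MemLp gz 2 μ)
    (hzrep : ∀ t ∈ Icc a c, hzr t = hzr a + ∫ s in a..t, gz s)
    (hzae : ∀ᵐ t ∂μ, Fᵀ.mulVec (z t) = hzr t) :
    ∫ t in a..c, (gx t ⬝ᵥ z t + gz t ⬝ᵥ x t) =
      hxr c ⬝ᵥ P.mulVec (hzr c) - hxr a ⬝ᵥ P.mulVec (hzr a) := by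
  subst hμ
  have hgxI : IntervalIntegrable gx volume a c :=
    (intervalIntegrable_iff_integrableOn_Icc_of_le hac.le).2 (hgx.integrable one_le_two)
  have hgzI : IntervalIntegrable gz volume a c :=
    (intervalIntegrable_iff_integrableOn_Icc_of_le hac.le).2 (hgz.integrable one_le_two)
  have hQ : P * Fᵀ * F = F := by
    simpa using mul_mul_transpose_eq_transpose hP1 hP4
  have hgxQ := IsPrimitiveOn.ae_mulVec_eq_self hxrep hac hgxI (P * Fᵀ)
    (by filter_upwards [hxae] with t ht; rw [← ht, mulVec_mulVec, hQ])
  have hgzR := IsPrimitiveOn.ae_mulVec_eq_self hzrep hac hgzI (Fᵀ * P)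
    (by filter_upwards [hzae] with t ht; rw [← ht, mulVec_mulVec, hP1])
  rw [← IsPrimitiveOn.integral_dotProduct_add_dotProduct hxrep
    (IsPrimitiveOn.mulVec hzrep hac.le hgzI P) hac.le hgxI
    ((mulVecLin P).toContinuousLinearMap.intervalIntegrable_comp hgzI)]
  rw [ae_restrict_iff' measurableSet_Icc] at hxae hzae hgxQ hgzR
  refine intervalIntegral.integral_congr_ae ?_
  filter_upwards [hxae, hzae, hgxQ, hgzR] with t hFx hFz hQgx hRgz ht
  have ht' : t ∈ Icc a c := Ioc_subset_Icc_self (uIoc_of_le hac.le ▸ ht)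
  rw [dotProduct_eq_dotProduct_mulVec_of_mulVec_eq hP4 (hQgx ht') (hFz ht'),
    dotProduct_eq_mulVec_dotProduct_of_mulVec_eq (hRgz ht') rfl, transpose_transpose, hFx ht']

/-- Integration by parts: with `hx` the AC representative of `F·x` (derivative `gx ∈ L²`),
`hz` the AC representative of `Fᵀ·z` (derivative `gz ∈ L²`), and `P` the Moore–Penrose
pseudoinverse of `Fᵀ`, we have
`∫ₐᶜ (⟨(F·x)', z⟩ + ⟨(Fᵀ·z)', x⟩) = ⟨F·x(c), (Fᵀ)⁺Fᵀ z(c)⟩ − ⟨F·x(a), (Fᵀ)⁺Fᵀ z(a)⟩`. -/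
theorem integration_by_parts {m n : ℕ} (F : Matrix (Fin m) (Fin n) ℝ)
    (P : Matrix (Fin m) (Fin n) ℝ)
    (hP1 : Fᵀ * P * Fᵀ = Fᵀ) (hP2 : P * Fᵀ * P = P)
    (hP3 : (Fᵀ * P)ᵀ = Fᵀ * P) (hP4 : (P * Fᵀ)ᵀ = P * Fᵀ)
    (a c : ℝ) (hac : a < c)
    (μ : Measure ℝ) (hμ : μ = volume.restrict (Icc a c))
    (x : ℝ → Fin n → ℝ) (hx : MemLp x 2 μ)
    (hxr gx : ℝ → Fin m → ℝ) (hgx : MemLp gx 2 μ)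
    (hxrep : ∀ t ∈ Icc a c, hxr t = hxr a + ∫ s in a..t, gx s)
    (hxae : ∀ᵐ t ∂μ, F.mulVec (x t) = hxr t)
    (z : ℝ → Fin m → ℝ) (hz : MemLp z 2 μ)
    (hzr gz : ℝ → Fin n → ℝ) (hgz : MemLp gz 2 μ)
    (hzrep : ∀ t ∈ Icc a c, hzr t = hzr a + ∫ s in a..t, gz s)
    (hzae : ∀ᵐ t ∂μ, Fᵀ.mulVec (z t) = hzr t) :
    ∫ t in a..c, (gx t ⬝ᵥ z t + gz t ⬝ᵥ x t) =
      hxr c ⬝ᵥ P.mulVec (hzr c) - hxr a ⬝ᵥ P.mulVec (hzr a) :=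
  integration_by_parts_general F P hP1 hP4 a c hac μ hμ x hxr gx hgx hxrep hxae z hzr gz hgz hzrep
    hzae
end

section
/- Let F = [[1,0],[0,0]] (a 2×2 real matrix) and consider the operator T : x ↦ F·(dx/dt) defined on the domain W₂ of absolutely continuous functions x : [0,1] → ℝ² with derivative in L². Then T is not a closed operator on L²([0,1];ℝ²): there exists a sequence xₙ in W₂ with xₙ → x in L² and T xₙ → 0 in L², but x ∉ W₂. -/
/-!
Since `F` annihilates the second coordinate, any sequence `(0, yₙ)` with `yₙ` absolutely
continuous has `F · (0, yₙ)' = 0`. Take for `yₙ` the primitive of a bump of height `n + 1` on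
`(1/2, 1/2 + 1/(n+1)]`: it differs from the Heaviside function `1_{[1/2, ∞)}` only on an
interval of length `1/(n+1)`, so `(0, yₙ) → (0, 1_{[1/2, ∞)})` in `L²`. A jump suffices to
leave the domain (the Cantor function is not needed): absolutely continuous functions are
continuous, and a continuous function on `[0, 1]` cannot agree almost everywhere with a jump.
-/

open MeasureTheory Set Filter Topology

noncomputable def bump (c δ : ℝ) : ℝ → ℝ := (Ioc c (c + δ)).indicator fun _ => δ⁻¹

lemma tendsto_ofReal_one_div_add_one_rpow {r : ℝ} (hr : 0 < r) :
    Tendsto (fun k : ℕ => ENNReal.ofReal (1 / (k + 1)) ^ r) atTop (𝓝 0) := by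
  have := ((ENNReal.continuous_rpow_const (y := r)).tendsto _).comp
    (ENNReal.tendsto_ofReal (tendsto_one_div_add_atTop_nhds_zero_nat (𝕜 := ℝ)))
  simpa [Function.comp_def, ENNReal.zero_rpow_of_pos hr] using this

section Bump

variable {c δ : ℝ}

lemma integral_bump (hc : 0 ≤ c) {t : ℝ} (ht : 0 ≤ t) :
    ∫ s in (0:ℝ)..t, bump c δ s = δ⁻¹ * max (min t (c + δ) - c) 0 := by
  rw [intervalIntegral.integral_of_le ht, bump, setIntegral_indicator measurableSet_Ioc,
    setIntegral_const, Ioc_inter_Ioc, sup_eq_right.mpr hc, measureReal_def, Real.volume_Ioc,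
    ENNReal.toReal_ofReal', smul_eq_mul, mul_comm]

lemma abs_integral_bump_sub_indicator_le (hc : 0 ≤ c) (hδ : 0 < δ) {t : ℝ} (ht : 0 ≤ t) :
    |(∫ s in (0:ℝ)..t, bump c δ s) - (Ici c).indicator 1 t| ≤
      (Icc c (c + δ)).indicator 1 t := by
  rw [integral_bump hc ht]
  rcases lt_or_ge t c with htc | htc
  · have hmax : max (min t (c + δ) - c) 0 = 0 := max_eq_right (by grind)
    simp [hmax, htc.not_ge]
  rcases le_or_gt t (c + δ) with htδ | htδ
  · have hmax : max (min t (c + δ) - c) 0 = t - c := by grind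
    have h_le : δ⁻¹ * (t - c) ≤ 1 := by
      rw [inv_mul_le_iff₀ hδ]; linarith
    have h_nonneg : 0 ≤ δ⁻¹ * (t - c) := by
      have := sub_nonneg.mpr htc; positivity
    rw [hmax, indicator_of_mem (mem_Ici.mpr htc),
      indicator_of_mem (show t ∈ Icc c (c + δ) from ⟨htc, htδ⟩), Pi.one_apply, abs_le]
    constructor <;> linarith
  · have hmax : max (min t (c + δ) - c) 0 = δ := by grind
    simp [hmax, htc, hδ.ne', htδ.not_ge]

lemma eLpNorm_integral_bump_sub_indicator_le (hc : 0 ≤ c) (hδ : 0 < δ) {p : ENNReal}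
    (hp₀ : p ≠ 0) (hp : p ≠ ⊤) :
    eLpNorm (fun t => (∫ s in (0:ℝ)..t, bump c δ s) - (Ici c).indicator 1 t) p
      (volume.restrict (Ici 0)) ≤ ENNReal.ofReal δ ^ (1 / p.toReal) := by
  calc _ ≤ eLpNorm ((Icc c (c + δ)).indicator 1) p (volume.restrict (Ici 0)) := by
        refine eLpNorm_mono_ae_real ?_
        filter_upwards [ae_restrict_mem measurableSet_Ici] with t ht
        exact abs_integral_bump_sub_indicator_le hc hδ ht
    _ ≤ eLpNorm ((Icc c (c + δ)).indicator 1) p volume :=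
        eLpNorm_mono_measure _ Measure.restrict_le_self
    _ = ENNReal.ofReal δ ^ (1 / p.toReal) := by
        rw [Pi.one_def, eLpNorm_indicator_const measurableSet_Icc hp₀ hp, Real.volume_Icc]
        simp

lemma tendsto_eLpNorm_integral_bump_sub_indicator (hc : 0 ≤ c) {p : ENNReal} (hp₀ : p ≠ 0)
    (hp : p ≠ ⊤) :
    Tendsto (fun k : ℕ => eLpNorm (fun t => (∫ s in (0:ℝ)..t, bump c (1 / (k + 1)) s) -
      (Ici c).indicator 1 t) p (volume.restrict (Ici 0))) atTop (𝓝 0) :=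
  tendsto_of_tendsto_of_tendsto_of_le_of_le tendsto_const_nhds
    (tendsto_ofReal_one_div_add_one_rpow (by simpa using ENNReal.toReal_pos hp₀ hp))
    (fun _ => zero_le) fun _ => eLpNorm_integral_bump_sub_indicator_le hc (by positivity) hp₀ hp

end Bump

section SmulConst

variable {α E : Type*} [MeasurableSpace α] [NormedAddCommGroup E] [NormedSpace ℝ E]
  {f : α → ℝ} {p : ENNReal} {μ : Measure α}

lemma MemLp.smul_const (hf : MemLp f p μ) (v : E) : MemLp (fun t => f t • v) p μ :=
  (ContinuousLinearMap.toSpanSingleton ℝ v).comp_memLp' hf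

lemma eLpNorm_smul_const_of_norm_eq_one {v : E} (hv : ‖v‖ = 1) :
    eLpNorm (fun t => f t • v) p μ = eLpNorm f p μ :=
  eLpNorm_congr_norm_ae (ae_of_all _ fun t => by simp [norm_smul, hv])

end SmulConst

section Continuity

variable {E : Type*} [NormedAddCommGroup E] [NormedSpace ℝ E] {a b : ℝ} {h : ℝ → E}

lemma continuousOn_of_eq_add_primitive (hab : a ≤ b) {g : ℝ → E}
    (hg : IntegrableOn g (Icc a b)) (hh : ∀ t ∈ Icc a b, h t = h a + ∫ s in a..t, g s) :
    ContinuousOn h (Icc a b) := by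
  have hprim := intervalIntegral.continuousOn_primitive_interval (a := a) (b := b)
    (by rwa [uIcc_of_le hab])
  rw [uIcc_of_le hab] at hprim
  exact (continuousOn_const.add hprim).congr hh

lemma not_ae_eq_indicator_Ici_smul_of_continuousOn {c : ℝ} (hac : a < c) (hcb : c < b)
    {v : E} (hv : v ≠ 0) (hh : ContinuousOn h (Icc a b)) :
    ¬ h =ᵐ[volume.restrict (Icc a b)] fun t => (Ici c).indicator (1 : ℝ → ℝ) t • v := by
  intro hae
  have h_left : h =ᵐ[volume.restrict (Icc a c)] fun _ => 0 := by
    rw [← Measure.restrict_congr_set Ico_ae_eq_Icc]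
    have := ae_mono (Measure.restrict_mono (Ico_subset_Icc_self.trans
      (Icc_subset_Icc le_rfl hcb.le)) le_rfl) hae
    filter_upwards [this, ae_restrict_mem measurableSet_Ico] with t ht htmem
    rw [ht, indicator_of_notMem (show t ∉ Ici c from not_le.mpr htmem.2), zero_smul]
  have h_right : h =ᵐ[volume.restrict (Icc c b)] fun _ => v := by
    have := ae_mono (Measure.restrict_mono (Icc_subset_Icc hac.le le_rfl) le_rfl) hae
    filter_upwards [this, ae_restrict_mem measurableSet_Icc] with t ht htmem
    rw [ht, indicator_of_mem (mem_Ici.mpr htmem.1), Pi.one_apply, one_smul]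
  have hc_left : h c = 0 := Measure.eqOn_Icc_of_ae_eq volume hac.ne h_left
    (hh.mono (Icc_subset_Icc le_rfl hcb.le)) continuousOn_const (right_mem_Icc.mpr hac.le)
  have hc_right : h c = v := Measure.eqOn_Icc_of_ae_eq volume hcb.ne h_right
    (hh.mono (Icc_subset_Icc hac.le le_rfl)) continuousOn_const (left_mem_Icc.mpr hcb.le)
  exact hv (hc_right.symm.trans hc_left)

end Continuity

/-- The mapping `x ↦ F · (dx/dt)` with `F = [[1,0],[0,0]]`, defined on absolutely continuous
functions on `[0,1]` with `L²` derivative, is not closed: there is a sequence `xs k` in the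
domain with `xs k → x` in `L²` and `F · (xs k)' → 0` in `L²`, while `x` is not (a.e. equal to)
an absolutely continuous function with `L²` derivative. -/
theorem not_closed_F_deriv
    (F : Matrix (Fin 2) (Fin 2) ℝ) (hF : F = !![1, 0; 0, 0])
    (μ : Measure ℝ) (hμ : μ = volume.restrict (Icc (0:ℝ) 1)) :
    ∃ (x : ℝ → Fin 2 → ℝ) (xs gs : ℕ → ℝ → Fin 2 → ℝ),
      MemLp x 2 μ ∧
      (∀ k, MemLp (gs k) 2 μ ∧
        ∀ t ∈ Icc (0:ℝ) 1, xs k t = xs k 0 + ∫ s in (0:ℝ)..t, gs k s) ∧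
      Tendsto (fun k => eLpNorm (fun t => xs k t - x t) 2 μ) atTop (nhds 0) ∧
      Tendsto (fun k => eLpNorm (fun t => F.mulVec (gs k t)) 2 μ) atTop (nhds 0) ∧
      ¬ ∃ (h g : ℝ → Fin 2 → ℝ), MemLp g 2 μ ∧
          (∀ t ∈ Icc (0:ℝ) 1, h t = h 0 + ∫ s in (0:ℝ)..t, g s) ∧
          (∀ᵐ t ∂μ, x t = h t) := by
  subst hF hμ
  set e : Fin 2 → ℝ := Pi.single 1 1
  have he : ‖e‖ = 1 := by simp [e, Pi.norm_single]
  have hFe : Matrix.mulVec !![(1:ℝ), 0; 0, 0] e = 0 := by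
    ext i; fin_cases i <;> simp [e]
  set ψ : ℕ → ℝ → ℝ := fun k => bump 2⁻¹ (1 / (k + 1))
  refine ⟨fun t => (Ici 2⁻¹).indicator (1 : ℝ → ℝ) t • e,
    fun k t => (∫ s in (0:ℝ)..t, ψ k s) • e, fun k t => ψ k t • e,
    ?_, fun k => ⟨?_, fun t _ => ?_⟩, ?_, ?_, ?_⟩
  · exact MemLp.smul_const (memLp_indicator_const 2 measurableSet_Ici 1
      (Or.inr (measure_ne_top _ _))) e
  · exact MemLp.smul_const (f := ψ k) (memLp_indicator_const 2 measurableSet_Ioc _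
      (Or.inr (measure_ne_top _ _))) e
  · simp [intervalIntegral.integral_smul_const]
  · refine tendsto_of_tendsto_of_tendsto_of_le_of_le tendsto_const_nhds
      (tendsto_eLpNorm_integral_bump_sub_indicator (c := 2⁻¹) (by norm_num) two_ne_zero
        ENNReal.ofNat_ne_top) (fun _ => zero_le) fun k => ?_
    simp only [← sub_smul, eLpNorm_smul_const_of_norm_eq_one he]
    exact eLpNorm_mono_measure _ (Measure.restrict_mono Icc_subset_Ici_self le_rfl)
  · simp [Matrix.mulVec_smul, hFe]
  · rintro ⟨h, g, hg, hh, hae⟩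
    exact not_ae_eq_indicator_Ici_smul_of_continuousOn (by norm_num) (by norm_num)
      (by simp [e]) (continuousOn_of_eq_add_primitive zero_le_one (hg.integrable one_le_two) hh)
      (EventuallyEq.symm hae)
end

section
/- Let C₄ be a real matrix and for ε ∈ (0,1) set Q(ε) = (ε²E + C₄ᵀC₄)⁻¹, where E is the identity. Then ε²E + C₄ᵀC₄ is invertible for every ε > 0, and for any matrix C₂ᵀ of compatible dimensions, the family ε ↦ Q(ε) C₂ᵀ is uniformly bounded in norm for ε ∈ (0,1) if and only if the column space of C₂ᵀ is contained in the column space of C₄ᵀC₄ (equivalently, the row space of C₂ is contained in the row space of C₄). -/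
/-!
Write `A = C₄ᵀC₄`, positive semidefinite, and `R(t) = (t•1 + A)⁻¹` for `t > 0`. Testing
`t‖y‖² ≤ ⟨y, (t•1 + A)y⟩` on the columns `y` of `R(t)` shows that every entry of `t R(t)` lies in
`[-1, 1]`; hence if `C₂ᵀ = A X`, then `R(t) C₂ᵀ = (1 - t R(t)) X` stays bounded. Conversely, if
`R(t) C₂ᵀ` stays bounded, then `A R(t) C₂ᵀ = C₂ᵀ - t R(t) C₂ᵀ → C₂ᵀ` as `t → 0⁺`, so `C₂ᵀ` lies in
the closure of the range of `X ↦ A X`, a finite-dimensional and hence closed subspace.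
-/

open Set Matrix Filter Topology

namespace Matrix

variable {n m : Type*}

theorem tendsto_smul_nhdsGT_zero_of_abs_apply_le {B : ℝ → Matrix n m ℝ} {M : ℝ}
    (h : ∀ t ∈ Ioo (0 : ℝ) 1, ∀ i j, |B t i j| ≤ M) :
    Tendsto (fun t => t • B t) (𝓝[>] 0) (𝓝 0) := by
  refine tendsto_pi_nhds.2 fun i => tendsto_pi_nhds.2 fun j => ?_
  have hM : Tendsto (fun t : ℝ => t * M) (𝓝[>] 0) (𝓝 0) := by
    simpa using ((continuous_mul_const M).tendsto 0).mono_left nhdsWithin_le_nhds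
  refine squeeze_zero_norm' ?_ hM
  filter_upwards [Ioo_mem_nhdsGT zero_lt_one] with t ht
  show |t * B t i j| ≤ t * M
  rw [abs_mul, abs_of_pos ht.1]
  exact mul_le_mul_of_nonneg_left (h t ht i j) ht.1.le

variable [Fintype n] [DecidableEq n]

theorem inv_smul_one_add_mul {R : Type*} [CommRing R] {A : Matrix n n R} {t : R}
    (h : IsUnit (t • 1 + A).det) : (t • 1 + A)⁻¹ * A = 1 - t • (t • 1 + A)⁻¹ := by
  have := nonsing_inv_mul _ h
  rw [Matrix.mul_add, Matrix.mul_smul, Matrix.mul_one] at this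
  exact eq_sub_of_add_eq' this

theorem mul_inv_smul_one_add {R : Type*} [CommRing R] {A : Matrix n n R} {t : R}
    (h : IsUnit (t • 1 + A).det) : A * (t • 1 + A)⁻¹ = 1 - t • (t • 1 + A)⁻¹ := by
  have := mul_nonsing_inv _ h
  rw [Matrix.add_mul, Matrix.smul_mul, Matrix.one_mul] at this
  exact eq_sub_of_add_eq' this

namespace PosSemidef

variable {A : Matrix n n ℝ}

theorem isUnit_det_smul_one_add (hA : A.PosSemidef) {t : ℝ} (ht : 0 < t) :
    IsUnit (t • 1 + A).det :=
  ((PosDef.one.smul ht).add_posSemidef hA).det_pos.ne'.isUnit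

theorem mul_dotProduct_self_le (hA : A.PosSemidef) (t : ℝ) (y : n → ℝ) :
    t * (y ⬝ᵥ y) ≤ y ⬝ᵥ ((t • 1 + A) *ᵥ y) := by
  have := hA.dotProduct_mulVec_nonneg y
  rw [add_mulVec, dotProduct_add, smul_mulVec, one_mulVec, dotProduct_smul, smul_eq_mul]
  simpa using this

theorem abs_mul_inv_smul_one_add_apply_le_one (hA : A.PosSemidef) {t : ℝ} (ht : 0 < t)
    (i k : n) : |t * (t • 1 + A)⁻¹ i k| ≤ 1 := by
  set y : n → ℝ := fun j => (t • 1 + A)⁻¹ j k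
  have hy : (t • 1 + A) *ᵥ y = Pi.single k 1 := by
    have : y = (t • 1 + A)⁻¹ *ᵥ Pi.single k 1 := by ext j; simp [y, mulVec_single]
    rw [this, mulVec_mulVec, mul_nonsing_inv _ (hA.isUnit_det_smul_one_add ht), one_mulVec]
  have hquad : t * (y ⬝ᵥ y) ≤ y k := by
    simpa [hy] using hA.mul_dotProduct_self_le t y
  have hsq : ∀ j, y j * y j ≤ y ⬝ᵥ y := fun j =>
    Finset.single_le_sum (f := fun j => y j * y j) (fun j _ => mul_self_nonneg _)
      (Finset.mem_univ j)
  have hS : 0 ≤ y ⬝ᵥ y := (mul_self_nonneg _).trans (hsq i)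
  have htS : t * t * (y ⬝ᵥ y) ≤ 1 := by
    rcases hS.eq_or_lt with h0 | h0
    · rw [← h0]; norm_num
    · have : t * (y ⬝ᵥ y) * (t * (y ⬝ᵥ y)) ≤ y ⬝ᵥ y := by
        nlinarith [mul_nonneg ht.le hS, hsq k]
      nlinarith
  rw [abs_le_one_iff_mul_self_le_one]
  nlinarith [mul_nonneg ht.le ht.le, hsq i]

theorem exists_bound_inv_smul_one_add_mul_mul [Fintype m] (hA : A.PosSemidef)
    (X : Matrix n m ℝ) : ∃ M, ∀ t : ℝ, 0 < t → ∀ i j, |((t • 1 + A)⁻¹ * (A * X)) i j| ≤ M := by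
  obtain ⟨M, hM⟩ := Finite.exists_le fun p : n × m => |X p.1 p.2| + ∑ k, |X k p.2|
  refine ⟨M, fun t ht i j => le_trans ?_ (hM (i, j))⟩
  rw [← Matrix.mul_assoc, inv_smul_one_add_mul (hA.isUnit_det_smul_one_add ht), Matrix.sub_mul,
    Matrix.one_mul, Matrix.smul_mul, sub_apply, smul_apply, smul_eq_mul, mul_apply,
    Finset.mul_sum]
  refine (abs_sub _ _).trans (add_le_add_right ((Finset.abs_sum_le_sum_abs _ _).trans ?_) _)
  refine Finset.sum_le_sum fun k _ => ?_
  rw [← mul_assoc, abs_mul]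
  exact mul_le_of_le_one_left (abs_nonneg _) (hA.abs_mul_inv_smul_one_add_apply_le_one ht i k)

theorem exists_eq_mul_of_abs_inv_smul_one_add_mul_apply_le [Fintype m] (hA : A.PosSemidef)
    {Y : Matrix n m ℝ} {M : ℝ}
    (h : ∀ t ∈ Ioo (0 : ℝ) 1, ∀ i j, |((t • 1 + A)⁻¹ * Y) i j| ≤ M) : ∃ X, Y = A * X := by
  have hclosed : IsClosed (LinearMap.range (mulLeftLinearMap m ℝ A) : Set (Matrix n m ℝ)) :=
    Submodule.closed_of_finiteDimensional _
  have hlim : Tendsto (fun t : ℝ => A * ((t • 1 + A)⁻¹ * Y)) (𝓝[>] 0) (𝓝 Y) := by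
    have := tendsto_const_nhds (x := Y).sub (tendsto_smul_nhdsGT_zero_of_abs_apply_le h)
    rw [sub_zero] at this
    refine this.congr' ?_
    filter_upwards [self_mem_nhdsWithin] with t ht
    rw [← Matrix.mul_assoc, mul_inv_smul_one_add (hA.isUnit_det_smul_one_add ht),
      Matrix.sub_mul, Matrix.one_mul, Matrix.smul_mul]
  obtain ⟨X, hX⟩ := hclosed.mem_of_tendsto hlim (Eventually.of_forall fun t => ⟨_, rfl⟩)
  exact ⟨X, hX.symm⟩

end PosSemidef
end Matrix

/-- `ε²E + C₄ᵀC₄` is invertible for all `ε > 0`, and the family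
`Q(ε)C₂ᵀ = (ε²E + C₄ᵀC₄)⁻¹ C₂ᵀ` is uniformly bounded (entrywise) for `ε ∈ (0,1)` iff the
column space of `C₂ᵀ` is contained in the column space of `C₄ᵀC₄`. -/
theorem Q_eps_uniformly_bounded_iff {p q s : ℕ}
    (C₄ : Matrix (Fin p) (Fin q) ℝ) (C₂ : Matrix (Fin s) (Fin q) ℝ)
    (Q : ℝ → Matrix (Fin q) (Fin q) ℝ)
    (hQ : ∀ ε : ℝ, Q ε = (ε ^ 2 • (1 : Matrix (Fin q) (Fin q) ℝ) + C₄ᵀ * C₄)⁻¹) :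
    (∀ ε : ℝ, 0 < ε →
        IsUnit (ε ^ 2 • (1 : Matrix (Fin q) (Fin q) ℝ) + C₄ᵀ * C₄).det) ∧
    ((∃ M : ℝ, ∀ ε ∈ Ioo (0:ℝ) 1, ∀ i j, |(Q ε * C₂ᵀ) i j| ≤ M) ↔
      ∃ X : Matrix (Fin q) (Fin s) ℝ, C₂ᵀ = (C₄ᵀ * C₄) * X) := by
  have hA : (C₄ᵀ * C₄).PosSemidef := by
    simpa using posSemidef_conjTranspose_mul_self C₄
  refine ⟨fun ε hε => hA.isUnit_det_smul_one_add (pow_pos hε 2), ?_, ?_⟩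
  · rintro ⟨M, hM⟩
    refine hA.exists_eq_mul_of_abs_inv_smul_one_add_mul_apply_le (M := M) fun t ht => ?_
    have hsqrt : √t ∈ Ioo (0 : ℝ) 1 :=
      ⟨Real.sqrt_pos.2 ht.1, (Real.sqrt_lt' one_pos).2 (by simpa using ht.2)⟩
    simpa [hQ, Real.sq_sqrt ht.1.le] using hM √t hsqrt
  · rintro ⟨X, hX⟩
    obtain ⟨M, hM⟩ := hA.exists_bound_inv_smul_one_add_mul_mul X
    exact ⟨M, fun ε hε => by simpa [hQ, hX] using hM (ε ^ 2) (pow_pos hε.1 2)⟩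
end

section
/- Let D be a densely defined closed linear operator between Hilbert spaces H₁ and H₂, and let y ∈ H₂. For ε > 0, let x_ε be the unique minimizer of x ↦ ‖Dx − y‖² + ε²‖x‖² over dom(D). Then the equation Dx = y has a pseudosolution (a minimizer of ‖Dx − y‖ over dom(D)) if and only if ‖x_ε‖ remains bounded as ε → 0⁺. -/
/-!
Evaluating the Tikhonov functional of parameter `ε` at the midpoint of `x_ε` and `x_δ`
(parallelogram law) and combining with the minimality of `x_δ` gives
`‖T x_ε - T x_δ‖² + ε² ‖x_ε - x_δ‖² ≤ 2 (ε² - δ²) (‖x_δ‖² - ‖x_ε‖²)`.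
So `‖x_ε‖` grows as `ε ↓ 0`; when it stays bounded it converges, and the inequality makes both
`x_ε` and `T x_ε` Cauchy as `ε → 0⁺`. The limit pair lies on the closed graph of `T`, and letting
`ε → 0` in the minimality of `x_ε` shows that it is a pseudosolution. Conversely, a pseudosolution
`x̂` satisfies `‖x_ε‖ ≤ ‖x̂‖` for every `ε > 0`.
-/

open LinearPMap Set Filter Topology

theorem norm_half_smul_add_sq {E : Type*} [NormedAddCommGroup E] [InnerProductSpace ℝ E]
    (u v : E) : ‖(2⁻¹ : ℝ) • (u + v)‖ ^ 2 = (‖u‖ ^ 2 + ‖v‖ ^ 2) / 2 - ‖u - v‖ ^ 2 / 4 := by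
  have := parallelogram_law_with_norm ℝ u v
  rw [norm_smul, mul_pow, Real.norm_of_nonneg (by norm_num)]
  linarith

theorem cauchy_map_nhdsGT_of_dist_sq_le {X : Type*} [PseudoMetricSpace X] {a : ℝ}
    {u : ℝ → X} {r : ℝ → ℝ} (hr : Tendsto r (𝓝[>] a) (𝓝 0))
    (h : ∀ ε δ, a < δ → δ < ε → dist (u ε) (u δ) ^ 2 ≤ r ε) :
    Cauchy (map u (𝓝[>] a)) := by
  refine Metric.cauchy_iff.2 ⟨inferInstance, fun η hη => ?_⟩
  have hsmall : ∀ᶠ ε in 𝓝[>] a, a < ε ∧ r ε < η ^ 2 :=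
    eventually_mem_nhdsWithin.and (hr.eventually (eventually_lt_nhds (by positivity)))
  refine ⟨u '' {ε | a < ε ∧ r ε < η ^ 2}, image_mem_map hsmall, ?_⟩
  have hlt : ∀ ε δ, a < δ → δ < ε → r ε < η ^ 2 → dist (u ε) (u δ) < η :=
    fun ε δ hδ hδε hε => lt_of_pow_lt_pow_left₀ 2 hη.le ((h ε δ hδ hδε).trans_lt hε)
  rintro _ ⟨ε, ⟨hε, hrε⟩, rfl⟩ _ ⟨δ, ⟨hδ, hrδ⟩, rfl⟩
  rcases lt_trichotomy δ ε with hδε | rfl | hεδ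
  · exact hlt ε δ hδ hδε hrε
  · simpa using hη
  · exact dist_comm (u ε) (u δ) ▸ hlt δ ε hε hεδ hrδ

theorem AntitoneOn.bddAbove_image_Ioi {f : ℝ → ℝ} {a M : ℝ} (hf : AntitoneOn f (Ioi a))
    (hM : ∀ᶠ x in 𝓝[>] a, f x ≤ M) : BddAbove (f '' Ioi a) := by
  refine ⟨M, ?_⟩
  rintro _ ⟨x, hx, rfl⟩
  obtain ⟨δ, hδM, hδ⟩ := (hM.and (Ioo_mem_nhdsGT hx)).exists
  exact (hf (mem_Ioi.2 hδ.1) hx hδ.2.le).trans hδM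

theorem LinearPMap.IsClosed.mem_graph_of_tendsto {R E F ι : Type*} [CommRing R] [AddCommGroup E]
    [Module R E] [AddCommGroup F] [Module R F] [TopologicalSpace E] [TopologicalSpace F]
    {T : E →ₗ.[R] F} (hT : T.IsClosed) {l : Filter ι} [l.NeBot] {u : ι → T.domain}
    {x : E} {z : F} (hx : Tendsto (fun i => (u i : E)) l (𝓝 x))
    (hz : Tendsto (fun i => T (u i)) l (𝓝 z)) :
    (x, z) ∈ T.graph :=
  _root_.IsClosed.mem_of_tendsto hT (hx.prodMk_nhds hz) (.of_forall fun i => T.mem_graph (u i))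

section Tikhonov

variable {H₁ H₂ : Type*} [NormedAddCommGroup H₁] [InnerProductSpace ℝ H₁]
  [NormedAddCommGroup H₂] [InnerProductSpace ℝ H₂] (T : H₁ →ₗ.[ℝ] H₂) (y : H₂)

def IsTikhonovMinimizer (ε : ℝ) (x : T.domain) : Prop :=
  ∀ x' : T.domain,
    ‖T x - y‖ ^ 2 + ε ^ 2 * ‖(x : H₁)‖ ^ 2 ≤ ‖T x' - y‖ ^ 2 + ε ^ 2 * ‖(x' : H₁)‖ ^ 2

def IsPseudosolution (x : T.domain) : Prop :=
  ∀ x' : T.domain, ‖T x - y‖ ≤ ‖T x' - y‖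

variable {T y}

namespace IsTikhonovMinimizer

variable {ε δ : ℝ} {xε xδ : T.domain}

theorem norm_le_of_isPseudosolution (hxε : IsTikhonovMinimizer T y ε xε) (hε : ε ≠ 0) {x : T.domain}
    (hx : IsPseudosolution T y x) : ‖(xε : H₁)‖ ≤ ‖(x : H₁)‖ := by
  have hres : ‖T x - y‖ ^ 2 ≤ ‖T xε - y‖ ^ 2 := pow_le_pow_left₀ (norm_nonneg _) (hx xε) 2
  have hsq : ε ^ 2 * ‖(xε : H₁)‖ ^ 2 ≤ ε ^ 2 * ‖(x : H₁)‖ ^ 2 := by linarith [hxε x]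
  exact (pow_le_pow_iff_left₀ (norm_nonneg _) (norm_nonneg _) two_ne_zero).1
    (le_of_mul_le_mul_left hsq (by positivity))

theorem norm_map_sub_sq_add_le (hxε : IsTikhonovMinimizer T y ε xε)
    (hxδ : IsTikhonovMinimizer T y δ xδ) :
    ‖T xε - T xδ‖ ^ 2 + ε ^ 2 * ‖(xε : H₁) - xδ‖ ^ 2 ≤
      2 * (ε ^ 2 - δ ^ 2) * (‖(xδ : H₁)‖ ^ 2 - ‖(xε : H₁)‖ ^ 2) := by
  have hmid := hxε ((2⁻¹ : ℝ) • (xε + xδ))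
  have hTmid :
      T ((2⁻¹ : ℝ) • (xε + xδ)) - y = (2⁻¹ : ℝ) • ((T xε - y) + (T xδ - y)) := by
    rw [T.map_smul, T.map_add]
    module
  rw [hTmid, Submodule.coe_smul, Submodule.coe_add, norm_half_smul_add_sq,
    norm_half_smul_add_sq] at hmid
  rw [← sub_sub_sub_cancel_right (T xε) (T xδ) y]
  linarith [hxδ xε]

variable (hxε : IsTikhonovMinimizer T y ε xε) (hxδ : IsTikhonovMinimizer T y δ xδ)
include hxε hxδ

theorem norm_sq_le_of_lt (hδ : 0 ≤ δ) (hδε : δ < ε) : ‖(xε : H₁)‖ ^ 2 ≤ ‖(xδ : H₁)‖ ^ 2 := by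
  have key := hxε.norm_map_sub_sq_add_le hxδ
  have hgap : 0 < ε ^ 2 - δ ^ 2 := by nlinarith
  nlinarith [sq_nonneg ‖T xε - T xδ‖, sq_nonneg ε, sq_nonneg ‖(xε : H₁) - xδ‖]

theorem norm_sub_sq_le (hδ : 0 ≤ δ) (hδε : δ < ε) :
    ‖(xε : H₁) - xδ‖ ^ 2 ≤ 2 * (‖(xδ : H₁)‖ ^ 2 - ‖(xε : H₁)‖ ^ 2) := by
  have key := hxε.norm_map_sub_sq_add_le hxδ
  have hmono := hxε.norm_sq_le_of_lt hxδ hδ hδε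
  have hε : 0 < ε ^ 2 := by nlinarith
  refine le_of_mul_le_mul_left ?_ hε
  nlinarith [sq_nonneg ‖T xε - T xδ‖, sq_nonneg δ]

theorem norm_map_sub_sq_le (hδ : 0 ≤ δ) (hδε : δ < ε) :
    ‖T xε - T xδ‖ ^ 2 ≤ 2 * ε ^ 2 * (‖(xδ : H₁)‖ ^ 2 - ‖(xε : H₁)‖ ^ 2) := by
  have key := hxε.norm_map_sub_sq_add_le hxδ
  have hmono := hxε.norm_sq_le_of_lt hxδ hδ hδε
  nlinarith [sq_nonneg ε, sq_nonneg ‖(xε : H₁) - xδ‖, sq_nonneg δ]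

end IsTikhonovMinimizer

variable {xe : ℝ → T.domain} (hxe : ∀ ε, 0 < ε → IsTikhonovMinimizer T y ε (xe ε))
include hxe

theorem antitoneOn_norm_sq_of_isTikhonovMinimizer :
    AntitoneOn (fun ε => ‖(xe ε : H₁)‖ ^ 2) (Ioi 0) := by
  intro δ hδ ε hε hδε
  rcases hδε.lt_or_eq with hδε | rfl
  · exact (hxe ε hε).norm_sq_le_of_lt (hxe δ hδ) hδ.le hδε
  · rfl

theorem exists_tendsto_of_isTikhonovMinimizer [CompleteSpace H₁] [CompleteSpace H₂]
    (hbdd : BddAbove ((fun ε => ‖(xe ε : H₁)‖ ^ 2) '' Ioi 0)) :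
    ∃ x z, Tendsto (fun ε => (xe ε : H₁)) (𝓝[>] 0) (𝓝 x) ∧
      Tendsto (fun ε => T (xe ε)) (𝓝[>] 0) (𝓝 z) := by
  set L := sSup ((fun ε => ‖(xe ε : H₁)‖ ^ 2) '' Ioi 0)
  have hL : Tendsto (fun ε => ‖(xe ε : H₁)‖ ^ 2) (𝓝[>] 0) (𝓝 L) :=
    (antitoneOn_norm_sq_of_isTikhonovMinimizer hxe).tendsto_nhdsGT hbdd
  have hle : ∀ δ, 0 < δ → ‖(xe δ : H₁)‖ ^ 2 ≤ L := fun δ hδ => le_csSup hbdd ⟨δ, hδ, rfl⟩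
  have hx : Cauchy (map (fun ε => (xe ε : H₁)) (𝓝[>] 0)) := by
    have hr : Tendsto (fun ε => 2 * (L - ‖(xe ε : H₁)‖ ^ 2)) (𝓝[>] 0) (𝓝 0) := by
      simpa using ((tendsto_const_nhds (x := L)).sub hL).const_mul 2
    refine cauchy_map_nhdsGT_of_dist_sq_le hr fun ε δ hδ hδε => ?_
    rw [dist_eq_norm]
    linarith [(hxe ε (hδ.trans hδε)).norm_sub_sq_le (hxe δ hδ) hδ.le hδε, hle δ hδ]
  have hz : Cauchy (map (fun ε => T (xe ε)) (𝓝[>] 0)) := by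
    have hr : Tendsto (fun ε : ℝ => 2 * ε ^ 2 * L) (𝓝[>] 0) (𝓝 0) :=
      tendsto_nhdsWithin_of_tendsto_nhds <| by
        simpa using (((continuous_pow 2).tendsto (0 : ℝ)).const_mul 2).mul_const L
    refine cauchy_map_nhdsGT_of_dist_sq_le hr fun ε δ hδ hδε => ?_
    have hε : 0 < ε := hδ.trans hδε
    rw [dist_eq_norm]
    have := (hxe ε hε).norm_map_sub_sq_le (hxe δ hδ) hδ.le hδε
    nlinarith [hle δ hδ, sq_nonneg ‖(xe ε : H₁)‖, sq_nonneg ε]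
  obtain ⟨x, hx⟩ := CompleteSpace.complete hx
  obtain ⟨z, hz⟩ := CompleteSpace.complete hz
  exact ⟨x, z, hx, hz⟩

theorem isPseudosolution_of_tendsto {x : T.domain}
    (hx : Tendsto (fun ε => T (xe ε)) (𝓝[>] 0) (𝓝 (T x))) : IsPseudosolution T y x := by
  intro x'
  have hlim : Tendsto (fun ε : ℝ => ‖T x' - y‖ ^ 2 + ε ^ 2 * ‖(x' : H₁)‖ ^ 2) (𝓝[>] 0)
      (𝓝 (‖T x' - y‖ ^ 2)) :=
    tendsto_nhdsWithin_of_tendsto_nhds <| by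
      simpa using
        (((continuous_pow 2).tendsto (0 : ℝ)).mul_const (‖(x' : H₁)‖ ^ 2)).const_add _
  have hsq : ‖T x - y‖ ^ 2 ≤ ‖T x' - y‖ ^ 2 :=
    le_of_tendsto_of_tendsto ((hx.sub_const y).norm.pow 2) hlim <|
      eventually_mem_nhdsWithin.mono fun ε hε => by
        nlinarith [hxe ε hε x', sq_nonneg ε, sq_nonneg ‖(xe ε : H₁)‖]
  exact (pow_le_pow_iff_left₀ (norm_nonneg _) (norm_nonneg _) two_ne_zero).1 hsq

end Tikhonov

theorem pseudosolution_iff_regularized_bounded_general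
    {H₁ H₂ : Type*}
    [NormedAddCommGroup H₁] [InnerProductSpace ℝ H₁] [CompleteSpace H₁]
    [NormedAddCommGroup H₂] [InnerProductSpace ℝ H₂] [CompleteSpace H₂]
    (T : H₁ →ₗ.[ℝ] H₂)
    (hclosed : T.IsClosed)
    (y : H₂) (xe : ℝ → T.domain)
    (hmin : ∀ ε : ℝ, 0 < ε → ∀ x : T.domain,
      ‖T (xe ε) - y‖ ^ 2 + ε ^ 2 * ‖(xe ε : H₁)‖ ^ 2 ≤
        ‖T x - y‖ ^ 2 + ε ^ 2 * ‖(x : H₁)‖ ^ 2) :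
    (∃ xhat : T.domain, ∀ x : T.domain, ‖T xhat - y‖ ≤ ‖T x - y‖) ↔
      ∃ M : ℝ, ∀ᶠ ε in nhdsWithin (0:ℝ) (Ioi 0), ‖(xe ε : H₁)‖ ≤ M := by
  constructor
  · rintro ⟨xhat, hxhat⟩
    exact ⟨‖(xhat : H₁)‖, eventually_mem_nhdsWithin.mono fun ε hε =>
      IsTikhonovMinimizer.norm_le_of_isPseudosolution (hmin ε hε) hε.ne' hxhat⟩
  · rintro ⟨M, hM⟩
    have hbdd := (antitoneOn_norm_sq_of_isTikhonovMinimizer hmin).bddAbove_image_Ioi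
      (hM.mono fun ε hε => pow_le_pow_left₀ (norm_nonneg _) hε 2)
    obtain ⟨x, z, hx, hz⟩ := exists_tendsto_of_isTikhonovMinimizer hmin hbdd
    obtain ⟨x₀, -, rfl⟩ := T.mem_graph_iff.1 (IsClosed.mem_graph_of_tendsto hclosed hx hz)
    exact ⟨x₀, isPseudosolution_of_tendsto hmin hz⟩

/-- Tikhonov regularization criterion: for a densely defined closed operator `T` and `y ∈ H₂`,
if `xe ε` is the minimizer of `x ↦ ‖T x − y‖² + ε²‖x‖²` over `dom T` for each `ε > 0`, then
`T x = y` has a pseudosolution (a minimizer of `‖T x − y‖` over `dom T`) iff `‖xe ε‖`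
stays bounded as `ε → 0⁺`. -/
theorem pseudosolution_iff_regularized_bounded
    {H₁ H₂ : Type*}
    [NormedAddCommGroup H₁] [InnerProductSpace ℝ H₁] [CompleteSpace H₁]
    [NormedAddCommGroup H₂] [InnerProductSpace ℝ H₂] [CompleteSpace H₂]
    (T : H₁ →ₗ.[ℝ] H₂)
    (hdense : Dense (T.domain : Set H₁))
    (hclosed : T.IsClosed)
    (y : H₂) (xe : ℝ → T.domain)
    (hmin : ∀ ε : ℝ, 0 < ε → ∀ x : T.domain,
      ‖T (xe ε) - y‖ ^ 2 + ε ^ 2 * ‖(xe ε : H₁)‖ ^ 2 ≤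
        ‖T x - y‖ ^ 2 + ε ^ 2 * ‖(x : H₁)‖ ^ 2) :
    (∃ xhat : T.domain, ∀ x : T.domain, ‖T xhat - y‖ ≤ ‖T x - y‖) ↔
      ∃ M : ℝ, ∀ᶠ ε in nhdsWithin (0:ℝ) (Ioi 0), ‖(xe ε : H₁)‖ ≤ M :=
  pseudosolution_iff_regularized_bounded_general T hclosed y xe hmin
end
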